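/- Let δ > 0, 0 < α < 1, κ > 0, ρ > 0, and ω the peridynamic dispersion relation ω(ξ) = ( (4κ ξ^{2α}/ρ) ∫_0^{ξδ} (1 - cos τ)/τ^{1+2α} dτ )^{1/2} for ξ > 0, extended evenly. Then lim_{ξ → +∞} ξ^{1-α} ω'(ξ) = 2α √( (κ/ρ) ∫_0^{+∞} (1 - cos τ)/τ^{1+2α} dτ ). -/

import Mathlib

open MeasureTheory Filter

/-- The peridynamic dispersion relation. -/
noncomputable def omega (κ ρ δ α ξ : ℝ) : ℝ :=
  Real.sqrt ((2 * κ / (ρ * δ ^ (2 * α))) *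
    ∫ z in (-1 : ℝ)..1, (1 - Real.cos (ξ * δ * z)) / |z| ^ (1 + 2 * α))

open MeasureTheory Filter Set intervalIntegral

namespace PeriAux

noncomputable def g (α τ : ℝ) : ℝ := (1 - Real.cos τ) / τ ^ (1 + 2 * α)

lemma g_nonneg (α : ℝ) (τ : ℝ) (hτ : 0 ≤ τ) : 0 ≤ g α τ :=
  div_nonneg (by linarith [Real.cos_le_one τ]) (Real.rpow_nonneg hτ _)

lemma g_contOn (α : ℝ) : ContinuousOn (g α) (Set.Ioi 0) := by
  apply ContinuousOn.div
  · exact (continuous_const.sub Real.continuous_cos).continuousOn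
  · exact ContinuousOn.rpow_const continuousOn_id (fun x hx => Or.inl (ne_of_gt hx))
  · intro x hx
    exact ne_of_gt (Real.rpow_pos_of_pos hx _)

lemma g_intOn (α : ℝ) (hα : 0 < α) (hα1 : α < 1) : IntegrableOn (g α) (Set.Ioi 0) := by
  have h01 : Set.Ioi (0:ℝ) = Set.Ioc 0 1 ∪ Set.Ioi 1 := (Set.Ioc_union_Ioi_eq_Ioi zero_le_one).symm
  rw [h01]
  apply IntegrableOn.union
  · have hint : IntegrableOn (fun τ : ℝ => τ ^ (1 - 2*α) / 2) (Set.Ioc 0 1) := by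
      apply Integrable.div_const
      simpa [IntegrableOn, intervalIntegrable_iff_integrableOn_Ioc_of_le (zero_le_one : (0:ℝ) ≤ 1)] using
        intervalIntegral.intervalIntegrable_rpow' (a := 0) (b := 1) (r := 1 - 2*α) (by linarith)
    apply Integrable.mono' hint
    · exact ((g_contOn α).mono Set.Ioc_subset_Ioi_self).aestronglyMeasurable measurableSet_Ioc
    · filter_upwards [ae_restrict_mem measurableSet_Ioc] with τ hτ
      obtain ⟨hτ0, hτ1⟩ := hτ
      rw [Real.norm_of_nonneg (g_nonneg α τ hτ0.le)]
      unfold g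
      rw [div_le_iff₀ (Real.rpow_pos_of_pos hτ0 _)]
      have hτ2 : τ ^ (1 - 2*α) * τ ^ (1 + 2*α) = τ ^ 2 := by
        rw [← Real.rpow_add hτ0, ← Real.rpow_natCast τ 2]
        norm_num
      calc 1 - Real.cos τ ≤ τ^2/2 := by nlinarith [Real.one_sub_sq_div_two_le_cos (x := τ)]
        _ = τ ^ (1 - 2*α) * τ ^ (1 + 2*α) / 2 := by rw [hτ2]
        _ = τ ^ (1 - 2*α) / 2 * τ ^ (1 + 2*α) := by ring
  · have hint : IntegrableOn (fun τ : ℝ => 2 * τ ^ (-(1 + 2*α))) (Set.Ioi 1) :=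
      (integrableOn_Ioi_rpow_of_lt (by linarith) one_pos).const_mul 2
    apply Integrable.mono' hint
    · exact ((g_contOn α).mono (Set.Ioi_subset_Ioi zero_le_one)).aestronglyMeasurable
        measurableSet_Ioi
    · filter_upwards [ae_restrict_mem measurableSet_Ioi] with τ hτ
      have hτ0 : (0:ℝ) < τ := lt_trans zero_lt_one hτ
      rw [Real.norm_of_nonneg (g_nonneg α τ hτ0.le)]
      unfold g
      rw [Real.rpow_neg hτ0.le, div_eq_mul_inv]
      exact mul_le_mul_of_nonneg_right (by linarith [Real.neg_one_le_cos τ])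
        (inv_nonneg.2 (Real.rpow_nonneg hτ0.le _))

lemma int13_pos (α : ℝ) (hα : 0 < α) (hα1 : α < 1) : 0 < ∫ τ in (1:ℝ)..3, g α τ := by
  apply intervalIntegral.intervalIntegral_pos_of_pos_on
  · rw [intervalIntegrable_iff_integrableOn_Ioc_of_le (by norm_num)]
    exact (g_intOn α hα hα1).mono_set (fun x hx => lt_trans zero_lt_one hx.1)
  · intro x hx
    have hx0 : (0:ℝ) < x := lt_trans zero_lt_one hx.1
    have hcos : Real.cos x < 1 := by
      rcases lt_or_eq_of_le (Real.cos_le_one x) with h | h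
      · exact h
      · exfalso
        have h2π : x < 2 * Real.pi := by nlinarith [Real.pi_gt_three, hx.2]
        have := (Real.cos_eq_one_iff_of_lt_of_lt
          (by linarith [Real.pi_pos] : -(2*Real.pi) < x) h2π).1 h
        linarith [hx.1]
    exact div_pos (by linarith) (Real.rpow_pos_of_pos hx0 _)
  · norm_num

lemma A_pos (α : ℝ) (hα : 0 < α) (hα1 : α < 1) (c : ℝ) (hc : 3 ≤ c) :
    0 < ∫ τ in (0:ℝ)..c, g α τ := by
  have h0c : (0:ℝ) ≤ c := by linarith
  rw [intervalIntegral.integral_of_le h0c]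
  calc (0:ℝ) < ∫ τ in (1:ℝ)..3, g α τ := int13_pos α hα hα1
    _ = ∫ τ in Set.Ioc (1:ℝ) 3, g α τ := intervalIntegral.integral_of_le (by norm_num)
    _ ≤ ∫ τ in Set.Ioc (0:ℝ) c, g α τ := by
        apply setIntegral_mono_set
        · exact (g_intOn α hα hα1).mono_set Set.Ioc_subset_Ioi_self
        · filter_upwards [ae_restrict_mem measurableSet_Ioc] with τ hτ
            using g_nonneg α τ (le_of_lt hτ.1)
        · exact (Set.Ioc_subset_Ioc zero_le_one hc).eventuallyLE

lemma key_eq (α : ℝ) (hα : 0 < α) (hα1 : α < 1) (c : ℝ) (hc : 0 < c) :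
    (∫ z in (-1:ℝ)..1, (1 - Real.cos (c * z)) / |z| ^ (1 + 2*α))
      = 2 * (c ^ (2*α) * ∫ τ in (0:ℝ)..c, g α τ) := by
  set G : ℝ → ℝ := fun z => (1 - Real.cos (c * z)) / |z| ^ (1 + 2*α) with hG
  have hGnn : ∀ z, 0 ≤ G z := fun z =>
    div_nonneg (by linarith [Real.cos_le_one (c*z)]) (Real.rpow_nonneg (abs_nonneg z) _)
  have hGcont : ContinuousOn G {z : ℝ | z ≠ 0} := by
    apply ContinuousOn.div
    · exact (continuous_const.sub
        (Real.continuous_cos.comp (continuous_const.mul continuous_id))).continuousOn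
    · exact ContinuousOn.rpow_const continuous_abs.continuousOn
        (fun x hx => Or.inl (abs_ne_zero.2 hx))
    · intro x hx
      exact ne_of_gt (Real.rpow_pos_of_pos (abs_pos.2 hx) _)
  have hGint : IntervalIntegrable G volume 0 1 := by
    rw [intervalIntegrable_iff_integrableOn_Ioc_of_le zero_le_one]
    have hint : IntegrableOn (fun z : ℝ => c^2/2 * z ^ (1 - 2*α)) (Set.Ioc 0 1) := by
      apply Integrable.const_mul
      simpa [IntegrableOn, intervalIntegrable_iff_integrableOn_Ioc_of_le (zero_le_one : (0:ℝ) ≤ 1)] using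
        intervalIntegral.intervalIntegrable_rpow' (a := 0) (b := 1) (r := 1 - 2*α) (by linarith)
    apply Integrable.mono' hint
    · exact (hGcont.mono (fun x hx => ne_of_gt hx.1)).aestronglyMeasurable measurableSet_Ioc
    · filter_upwards [ae_restrict_mem measurableSet_Ioc] with z hz
      obtain ⟨hz0, hz1⟩ := hz
      rw [Real.norm_of_nonneg (hGnn z), hG]
      simp only
      rw [abs_of_pos hz0, div_le_iff₀ (Real.rpow_pos_of_pos hz0 _)]
      have hz2 : z ^ (1 - 2*α) * z ^ (1 + 2*α) = z ^ 2 := by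
        rw [← Real.rpow_add hz0, ← Real.rpow_natCast z 2]
        norm_num
      calc 1 - Real.cos (c*z) ≤ (c*z)^2/2 := by
            nlinarith [Real.one_sub_sq_div_two_le_cos (x := c*z)]
        _ = c^2/2 * (z ^ (1 - 2*α) * z ^ (1 + 2*α)) := by rw [hz2]; ring
        _ = c^2/2 * z ^ (1 - 2*α) * z ^ (1 + 2*α) := by ring
  have hGeven : ∀ z, G (-z) = G z := by
    intro z
    simp [hG, Real.cos_neg, abs_neg, mul_neg]
  have hGint' : IntervalIntegrable G volume (-1) 0 := by
    have h2 := (IntervalIntegrable.iff_comp_neg (h := enorm_ne_top)).mp hGint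
    simp only [hGeven, neg_zero] at h2
    exact h2.symm
  have hsplit : (∫ z in (-1:ℝ)..1, G z)
      = (∫ z in (-1:ℝ)..0, G z) + ∫ z in (0:ℝ)..1, G z :=
    (intervalIntegral.integral_add_adjacent_intervals hGint' hGint).symm
  have hneg : (∫ z in (-1:ℝ)..0, G z) = ∫ z in (0:ℝ)..1, G z := by
    rw [show (-1:ℝ) = -(1:ℝ) by norm_num, show (0:ℝ) = -(0:ℝ) by norm_num,
      ← intervalIntegral.integral_comp_neg (fun z => G z)]
    simp [hGeven]
  have hp_ne : (1 + 2*α) ≠ 0 := by positivity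
  have hhalf : (∫ z in (0:ℝ)..1, G z) = c ^ (2*α) * ∫ τ in (0:ℝ)..c, g α τ := by
    have hcongr : (∫ z in (0:ℝ)..1, G z)
        = ∫ z in (0:ℝ)..1, c ^ (2*α) * (c * g α (c * z)) := by
      apply intervalIntegral.integral_congr
      intro z hz
      rw [Set.uIcc_of_le zero_le_one] at hz
      obtain ⟨hz0, hz1⟩ := hz
      rcases eq_or_lt_of_le hz0 with h0 | h0
      · rw [← h0]
        simp [hG, g, Real.zero_rpow hp_ne]
      · have hcc : c ^ (2*α) * c = c ^ (1 + 2*α) := by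
          rw [add_comm, Real.rpow_add_one (ne_of_gt hc)]
        have hcp : (0:ℝ) < c ^ (1 + 2*α) := Real.rpow_pos_of_pos hc _
        rw [hG]
        simp only [g]
        rw [abs_of_pos h0, Real.mul_rpow hc.le h0.le, ← mul_assoc, hcc,
          mul_div_assoc', mul_div_mul_left _ _ (ne_of_gt hcp)]
    rw [hcongr, intervalIntegral.integral_const_mul]
    congr 1
    rw [intervalIntegral.integral_const_mul]
    have h3 := intervalIntegral.smul_integral_comp_mul_left (f := g α) (a := (0:ℝ)) (b := 1) c
    simp only [smul_eq_mul, mul_zero, mul_one] at h3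
    exact h3
  rw [hsplit, hneg, hhalf]
  ring


lemma Ainf_pos (α : ℝ) (hα : 0 < α) (hα1 : α < 1) :
    0 < ∫ τ in Set.Ioi (0:ℝ), g α τ := by
  calc (0:ℝ) < ∫ τ in (1:ℝ)..3, g α τ := int13_pos α hα hα1
    _ = ∫ τ in Set.Ioc (1:ℝ) 3, g α τ := intervalIntegral.integral_of_le (by norm_num)
    _ ≤ ∫ τ in Set.Ioi (0:ℝ), g α τ := by
        apply setIntegral_mono_set (g_intOn α hα hα1)
        · filter_upwards [ae_restrict_mem measurableSet_Ioi] with τ hτ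
            using g_nonneg α τ (le_of_lt hτ)
        · exact HasSubset.Subset.eventuallyLE
            (fun x hx => lt_trans zero_lt_one hx.1 : Set.Ioc (1:ℝ) 3 ⊆ Set.Ioi 0)

lemma A_hasDeriv (α : ℝ) (hα : 0 < α) (hα1 : α < 1) (δ : ℝ) (hδ : 0 < δ)
    (ξ : ℝ) (hξ : 0 < ξ) :
    HasDerivAt (fun x : ℝ => ∫ τ in (0:ℝ)..(x*δ), g α τ) (g α (ξ*δ) * δ) ξ := by
  have hc : 0 < ξ * δ := mul_pos hξ hδ
  have h1 : HasDerivAt (fun t : ℝ => ∫ τ in (0:ℝ)..t, g α τ) (g α (ξ*δ)) (ξ*δ) := by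
    apply intervalIntegral.integral_hasDerivAt_right
    · rw [intervalIntegrable_iff_integrableOn_Ioc_of_le hc.le]
      exact (g_intOn α hα hα1).mono_set Set.Ioc_subset_Ioi_self
    · exact ContinuousOn.stronglyMeasurableAtFilter isOpen_Ioi (g_contOn α) _ hc
    · exact (g_contOn α).continuousAt (Ioi_mem_nhds hc)
  have h2 : HasDerivAt (fun x : ℝ => x * δ) δ ξ := by
    simpa using (hasDerivAt_id ξ).mul_const δ
  simpa [Function.comp_def] using h1.comp ξ h2

end PeriAux

open PeriAux

lemma omega_eq (κ ρ δ α : ℝ) (hκ : 0 < κ) (hρ : 0 < ρ) (hδ : 0 < δ)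
    (hα : 0 < α) (hα1 : α < 1) (ξ : ℝ) (hξ : 0 < ξ) :
    omega κ ρ δ α ξ
      = 2 * Real.sqrt (κ/ρ) * (ξ ^ α * Real.sqrt (∫ τ in (0:ℝ)..(ξ*δ), g α τ)) := by
  have hc : 0 < ξ * δ := mul_pos hξ hδ
  unfold omega
  rw [key_eq α hα hα1 (ξ*δ) hc]
  set A := ∫ τ in (0:ℝ)..(ξ*δ), g α τ with hA
  have hAnn : 0 ≤ A := by
    apply intervalIntegral.integral_nonneg hc.le
    intro τ hτ; exact g_nonneg α τ hτ.1
  have hinner : 2 * κ / (ρ * δ ^ (2*α)) * (2 * ((ξ*δ) ^ (2*α) * A))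
      = 4 * (κ/ρ) * (ξ ^ (2*α) * A) := by
    rw [Real.mul_rpow hξ.le hδ.le]
    have hd : (0:ℝ) < δ ^ (2*α) := Real.rpow_pos_of_pos hδ _
    field_simp
    ring
  rw [hinner, Real.sqrt_mul (by positivity), Real.sqrt_mul (by positivity : (0:ℝ) ≤ ξ ^ (2*α))]
  have h4 : Real.sqrt (4 * (κ/ρ)) = 2 * Real.sqrt (κ/ρ) := by
    rw [Real.sqrt_mul (by norm_num : (0:ℝ) ≤ 4), show (4:ℝ) = 2^2 by norm_num,
      Real.sqrt_sq (by norm_num : (0:ℝ) ≤ 2)]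
  have hxa : Real.sqrt (ξ ^ (2*α)) = ξ ^ α := by
    have h5 : ξ ^ (2*α) = (ξ ^ α)^2 := by
      rw [← Real.rpow_natCast (ξ ^ α) 2, ← Real.rpow_mul hξ.le]
      norm_num [mul_comm]
    rw [h5, Real.sqrt_sq (Real.rpow_nonneg hξ.le α)]
  rw [h4, hxa]

theorem deriv_omega_asymptotic_infty (κ ρ δ α : ℝ) (hκ : 0 < κ) (hρ : 0 < ρ)
    (hδ : 0 < δ) (hα : 0 < α) (hα1 : α < 1) :
    Tendsto (fun ξ : ℝ => ξ ^ (1 - α) * deriv (omega κ ρ δ α) ξ) atTop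
      (nhds (2 * α * Real.sqrt ((κ / ρ) *
        ∫ τ in Set.Ioi (0 : ℝ), (1 - Real.cos τ) / τ ^ (1 + 2 * α)))) := by
  set K := Real.sqrt (κ/ρ) with hK
  set A : ℝ → ℝ := fun x => ∫ τ in (0:ℝ)..(x*δ), g α τ with hA
  set Ainf := ∫ τ in Set.Ioi (0:ℝ), g α τ with hAinf
  have hAinfpos : 0 < Ainf := Ainf_pos α hα hα1
  have hAtend : Tendsto A atTop (nhds Ainf) :=
    MeasureTheory.intervalIntegral_tendsto_integral_Ioi 0 (g_intOn α hα hα1)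
      (tendsto_id.atTop_mul_const hδ)
  have hsqrtA : Tendsto (fun ξ => Real.sqrt (A ξ)) atTop (nhds (Real.sqrt Ainf)) :=
    (Real.continuous_sqrt.tendsto Ainf).comp hAtend
  -- the explicit eventual form
  set E : ℝ → ℝ := fun ξ => 2*K*(α*Real.sqrt (A ξ))
    + (ξ*(g α (ξ*δ)*δ)) * (K/Real.sqrt (A ξ)) with hE
  have heventual : (fun ξ : ℝ => ξ ^ (1 - α) * deriv (omega κ ρ δ α) ξ) =ᶠ[atTop] E := by
    filter_upwards [eventually_gt_atTop (max (3/δ) 0)] with ξ hξ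
    have hξpos : 0 < ξ := lt_of_le_of_lt (le_max_right _ _) hξ
    have hc3 : 3 ≤ ξ * δ := by
      have h1 : 3/δ < ξ := lt_of_le_of_lt (le_max_left _ _) hξ
      rw [div_lt_iff₀ hδ] at h1
      linarith
    have hApos : 0 < A ξ := A_pos α hα hα1 (ξ*δ) hc3
    have hs : Real.sqrt (A ξ) ≠ 0 := ne_of_gt (Real.sqrt_pos.2 hApos)
    -- derivative of omega at ξ
    have hsq : HasDerivAt (fun x : ℝ => Real.sqrt (A x))
        (1/(2*Real.sqrt (A ξ)) * (g α (ξ*δ) * δ)) ξ := by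
      have h6 := (Real.hasDerivAt_sqrt (ne_of_gt hApos)).comp ξ
        (A_hasDeriv α hα hα1 δ hδ ξ hξpos)
      simpa [Function.comp_def] using h6
    have hpow : HasDerivAt (fun x : ℝ => x ^ α) (α * ξ^(α-1)) ξ :=
      Real.hasDerivAt_rpow_const (Or.inl (ne_of_gt hξpos))
    have hfull := (hpow.mul hsq).const_mul (2*K)
    have heqnhds : omega κ ρ δ α =ᶠ[nhds ξ] fun x => 2*K*(x^α*Real.sqrt (A x)) := by
      filter_upwards [Ioi_mem_nhds hξpos] with x hx
      exact omega_eq κ ρ δ α hκ hρ hδ hα hα1 x hx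
    have hderiv : deriv (omega κ ρ δ α) ξ
        = 2*K*(α * ξ^(α-1) * Real.sqrt (A ξ)
            + ξ^α * (1/(2*Real.sqrt (A ξ)) * (g α (ξ*δ) * δ))) := by
      rw [heqnhds.deriv_eq]
      exact hfull.deriv
    rw [hderiv]
    have h1 : ξ^(1-α) * ξ^(α-1) = 1 := by
      rw [← Real.rpow_add hξpos, show (1-α)+(α-1) = 0 by ring, Real.rpow_zero]
    have h2 : ξ^(1-α) * ξ^α = ξ := by
      rw [← Real.rpow_add hξpos, show (1-α)+α = 1 by ring, Real.rpow_one]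
    have expand : ξ^(1-α) * (2*K*(α * ξ^(α-1) * Real.sqrt (A ξ)
            + ξ^α * (1/(2*Real.sqrt (A ξ)) * (g α (ξ*δ) * δ))))
        = 2*K*(α*((ξ^(1-α) * ξ^(α-1))*Real.sqrt (A ξ)))
          + ((ξ^(1-α) * ξ^α)*(g α (ξ*δ)*δ)) * (K/Real.sqrt (A ξ)) := by
      field_simp
    rw [expand, h1, h2, hE]
    simp
  -- limits
  have hzero : Tendsto (fun ξ : ℝ => ξ * (g α (ξ*δ) * δ)) atTop (nhds 0) := by
    apply squeeze_zero_norm'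
      (a := fun ξ : ℝ => 2*δ^(-(2*α)) * ξ^(-(2*α)))
    · filter_upwards [eventually_gt_atTop 0] with ξ hξ
      have hc : 0 < ξ*δ := mul_pos hξ hδ
      have hnn : 0 ≤ ξ * (g α (ξ*δ) * δ) :=
        mul_nonneg hξ.le (mul_nonneg (g_nonneg α _ hc.le) hδ.le)
      rw [Real.norm_of_nonneg hnn]
      have hgb : g α (ξ*δ) ≤ 2 / (ξ*δ)^(1+2*α) := by
        unfold g
        apply div_le_div_of_nonneg_right ?_ (Real.rpow_pos_of_pos hc _).le
        linarith [Real.neg_one_le_cos (ξ*δ)]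
      have e3 : (ξ*δ) * (2/(ξ*δ)^(1+2*α)) = 2 * (ξ*δ)^(-(2*α)) := by
        rw [show -(2*α) = 1 - (1+2*α) by ring, Real.rpow_sub hc, Real.rpow_one]
        ring
      have e4 : (ξ*δ)^(-(2*α)) = ξ^(-(2*α)) * δ^(-(2*α)) := Real.mul_rpow hξ.le hδ.le
      calc ξ * (g α (ξ*δ) * δ) = (ξ*δ) * g α (ξ*δ) := by ring
        _ ≤ (ξ*δ) * (2/(ξ*δ)^(1+2*α)) := mul_le_mul_of_nonneg_left hgb hc.le
        _ = 2 * (ξ*δ)^(-(2*α)) := e3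
        _ = 2*δ^(-(2*α)) * ξ^(-(2*α)) := by rw [e4]; ring
    · have h7 := (tendsto_rpow_neg_atTop (show (0:ℝ) < 2*α by linarith)).const_mul
        (2*δ^(-(2*α)))
      simpa using h7
  have hquot : Tendsto (fun ξ : ℝ => K / Real.sqrt (A ξ)) atTop
      (nhds (K / Real.sqrt Ainf)) :=
    tendsto_const_nhds.div hsqrtA (ne_of_gt (Real.sqrt_pos.2 hAinfpos))
  have htendE : Tendsto E atTop (nhds (2*K*(α*Real.sqrt Ainf) + 0)) := by
    apply Tendsto.add
    · exact (hsqrtA.const_mul α).const_mul (2*K)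
    · simpa using hzero.mul hquot
  have hval : 2*K*(α*Real.sqrt Ainf) + 0
      = 2 * α * Real.sqrt ((κ/ρ) * ∫ τ in Set.Ioi (0:ℝ),
          (1 - Real.cos τ) / τ ^ (1 + 2 * α)) := by
    have : (∫ τ in Set.Ioi (0:ℝ), (1 - Real.cos τ) / τ ^ (1 + 2 * α)) = Ainf := rfl
    rw [this, Real.sqrt_mul (by positivity : (0:ℝ) ≤ κ/ρ), ← hK]
    ring
  rw [← hval]
  exact htendE.congr' heventual.symm
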